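/- Let G be (⌊3f/2⌋+1)-connected, F a vertex set with |F| ≤ f, and let A, B partition V(G) with v ∈ B. Suppose |B ∩ (F∖{v})| ≤ ⌊f/2⌋ and |A| ≥ f+1. Then there exist f+1 pairwise internally disjoint paths from distinct vertices of A to v such that no internal vertex of any path lies in F. -/

import Mathlib

open Finset

/-- Internal vertices of a walk: all vertices of its support except the endpoints. -/
def SimpleGraph.Walk.internals {V : Type*} {G : SimpleGraph V} {u v : V}
    (p : G.Walk u v) : List V :=
  p.support.tail.dropLast

/-- A graph is `k`-connected if it has more than `k` vertices and removing any set
of at most `k` vertices leaves it connected. -/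
def KConnected {V : Type*} [DecidableEq V] (G : SimpleGraph V) (k : ℕ) : Prop :=
  k < Nat.card V ∧
    ∀ S : Finset V, S.card ≤ k → (((⊤ : G.Subgraph).deleteVerts ↑S).coe).Connected

/-!
Menger's theorem goes by induction on the edges (Göring's argument). If deleting an edge `xy`
leaves a separator `S` with fewer than `k` vertices, then every separator between `X` and
`S ∪ {x}` in the smaller graph still separates `X` from `Y` in the whole graph, and likewise
for `S ∪ {y}` and `Y`. Induction gives linkages from `X` to `S ∪ {x}` and from `Y` to
`S ∪ {y}`; cut at their first hit, and with the walk ending at `y` extended along `yx`, they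
can be glued, because apart from their endpoints they run through the vertices reachable from
`X`, respectively from `Y`, without meeting `S`, and these two sets are disjoint.

For the fan, delete `v` and the at most `⌊f/2⌋` vertices of `B ∩ (F ∖ {v})`, and choose `f + 1`
sources in `A` containing all of `A ∩ F`. A separator of at most `f` vertices between the
sources and the remaining neighbours of `v` would, together with the deleted vertices, cut a
source off from `v` with at most `⌊3f/2⌋ + 1` vertices. So Menger gives `f + 1` disjoint paths,
which extend to a fan at `v`. Their internal vertices avoid `F`: those in `B` were deleted, and
those in `A ∩ F` are sources of other paths.
-/

namespace SimpleGraph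

variable {V : Type*} {H : SimpleGraph V}

def reachAvoiding (H : SimpleGraph V) (X S : Set V) : Set V :=
  {u | ∃ a ∈ X, ∃ p : H.Walk a u, ∀ w ∈ p.support, w ∉ S}

def Separates (H : SimpleGraph V) (X Y S : Set V) : Prop :=
  Disjoint (H.reachAvoiding X S) Y

section reachAvoiding

variable {X Y S T : Set V} {u w : V}

lemma notMem_of_mem_reachAvoiding (hu : u ∈ H.reachAvoiding X S) : u ∉ S := by
  obtain ⟨a, -, p, hp⟩ := hu
  exact hp u p.end_mem_support

lemma mem_reachAvoiding_of_mem (hu : u ∈ X) (huS : u ∉ S) : u ∈ H.reachAvoiding X S :=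
  ⟨u, hu, .nil, by simpa⟩

lemma mem_reachAvoiding_of_mem_support {a b : V} (ha : a ∈ X) (p : H.Walk a b)
    (hp : ∀ w ∈ p.support, w ∉ S) (hu : u ∈ p.support) : u ∈ H.reachAvoiding X S := by
  classical
  exact ⟨a, ha, p.takeUntil u hu,
    fun w hw => hp w (p.support_takeUntil_subset_support hu hw)⟩

lemma mem_reachAvoiding_of_adj (hu : u ∈ H.reachAvoiding X S) (huw : H.Adj u w) (hw : w ∉ S) :
    w ∈ H.reachAvoiding X S := by
  obtain ⟨a, ha, p, hp⟩ := hu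
  refine mem_reachAvoiding_of_mem_support ha (p.concat huw) ?_ (by simp)
  simpa [Walk.support_concat, or_imp, forall_and] using ⟨hp, hw⟩

lemma reachAvoiding_anti (h : S ⊆ T) : H.reachAvoiding X T ⊆ H.reachAvoiding X S :=
  fun _ ⟨a, ha, p, hp⟩ => ⟨a, ha, p, fun w hw hwS => hp w hw (h hwS)⟩

lemma separates_self : H.Separates X S S :=
  Set.disjoint_left.2 fun _ hu => notMem_of_mem_reachAvoiding hu

lemma Separates.symm (h : H.Separates X Y S) : H.Separates Y X S := by
  refine Set.disjoint_left.2 fun u ⟨b, hb, p, hp⟩ hu => Set.disjoint_left.1 h ?_ hb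
  exact ⟨u, hu, p.reverse, by simpa using hp⟩

lemma Separates.disjoint_reachAvoiding (h : H.Separates X Y S) (hT : H.Separates X S T) :
    Disjoint (H.reachAvoiding X T) (H.reachAvoiding Y S) := by
  classical
  refine Set.disjoint_left.2 fun u ⟨a, ha, p, hp⟩ ⟨b, hb, q, hq⟩ => ?_
  by_cases hpS : ∀ w ∈ p.support, w ∉ S
  · exact Set.disjoint_left.1 h
      ⟨a, ha, p.append q.reverse, by simpa [or_imp, forall_and] using ⟨hpS, hq⟩⟩ hb
  push Not at hpS
  obtain ⟨s, hs, hsS⟩ := hpS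
  exact Set.disjoint_left.1 hT (mem_reachAvoiding_of_mem_support ha p hp hs) hsS

end reachAvoiding

theorem Walk.exists_prefix_reachAvoiding {Z : Set V} {a b : V} (p : H.Walk a b) (hb : b ∈ Z) :
    ∃ c ∈ Z, ∃ q : H.Walk a c, q.support ⊆ p.support ∧
      ∀ u ∈ q.support, u = c ∨ u ∈ H.reachAvoiding {a} Z := by
  induction p with
  | nil => exact ⟨_, hb, .nil, List.Subset.refl _, by simp⟩
  | @cons a _ _ had p ih =>
    by_cases ha : a ∈ Z
    · exact ⟨a, ha, .nil, by simp, by simp⟩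
    obtain ⟨c, hc, q, hq, hq'⟩ := ih hb
    refine ⟨c, hc, .cons had q, List.cons_subset_cons _ hq, ?_⟩
    simp only [Walk.support_cons, List.mem_cons, forall_eq_or_imp]
    refine ⟨.inr (mem_reachAvoiding_of_mem rfl ha), fun u hu => (hq' u hu).imp_right ?_⟩
    rintro ⟨_, rfl, r, hr⟩
    exact ⟨a, rfl, .cons had r, by simpa [ha] using hr⟩

structure Linkage (H : SimpleGraph V) (X Y : Set V) (k : ℕ) where
  src : Fin k → V
  tgt : Fin k → V
  walk : ∀ i, H.Walk (src i) (tgt i)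
  src_mem : ∀ i, src i ∈ X
  tgt_mem : ∀ i, tgt i ∈ Y
  pairwise_disjoint : Pairwise fun i j => (walk i).support.Disjoint (walk j).support

namespace Linkage

variable {X Y X' Y' : Set V} {k : ℕ} (L : H.Linkage X Y k)

def ofSupportSubset {H' : SimpleGraph V} {a b : Fin k → V} (W : ∀ i, H'.Walk (a i) (b i))
    (ha : ∀ i, a i ∈ X') (hb : ∀ i, b i ∈ Y') (hW : ∀ i, (W i).support ⊆ (L.walk i).support) :
    H'.Linkage X' Y' k where
  src := a
  tgt := b
  walk := W
  src_mem := ha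
  tgt_mem := hb
  pairwise_disjoint _ _ hij :=
    List.disjoint_of_subset_right (hW _) <|
      List.disjoint_of_subset_left (hW _) (L.pairwise_disjoint hij)

def mapLe {H' : SimpleGraph V} (h : H ≤ H') : H'.Linkage X Y k :=
  L.ofSupportSubset (fun i => (L.walk i).mapLe h) L.src_mem L.tgt_mem (by simp)

def reverse : H.Linkage Y X k :=
  L.ofSupportSubset (fun i => (L.walk i).reverse) L.tgt_mem L.src_mem (by simp)

lemma eq_of_mem_support {i j : Fin k} {u : V} (hi : u ∈ (L.walk i).support)
    (hj : u ∈ (L.walk j).support) : i = j := by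
  by_contra hij
  exact L.pairwise_disjoint hij hi hj

lemma tgt_injective : Function.Injective L.tgt := fun i j h =>
  L.eq_of_mem_support (L.walk i).end_mem_support (by rw [h]; exact (L.walk j).end_mem_support)

lemma src_injective : Function.Injective L.src :=
  L.reverse.tgt_injective

lemma exists_tgt_eq {Z : Finset V} (L : H.Linkage X Z k) (hZ : Z.card ≤ k) {z : V}
    (hz : z ∈ Z) : ∃ i, L.tgt i = z := by
  classical
  have himage : univ.image L.tgt = Z := by
    refine eq_of_subset_of_card_le (fun u hu => ?_) ?_
    · obtain ⟨i, -, rfl⟩ := mem_image.1 hu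
      exact L.tgt_mem i
    · rwa [card_image_of_injective _ L.tgt_injective, card_univ, Fintype.card_fin]
  simpa [← himage] using hz

lemma exists_support_subset_reachAvoiding {Z : Set V} (L : H.Linkage X Z k) :
    ∃ L' : H.Linkage X Z k,
      ∀ i, ∀ u ∈ (L'.walk i).support, u = L'.tgt i ∨ u ∈ H.reachAvoiding X Z := by
  choose c hc q hq hq' using fun i => (L.walk i).exists_prefix_reachAvoiding (L.tgt_mem i)
  refine ⟨L.ofSupportSubset q L.src_mem hc hq, fun i u hu => (hq' i u hu).imp_right ?_⟩
  rintro ⟨_, rfl, r, hr⟩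
  exact ⟨_, L.src_mem i, r, hr⟩

lemma eq_src_of_mem_support {Z : Finset V} (L : H.Linkage Z Y k) (hZ : Z.card ≤ k) {i : Fin k}
    {x : V} (hx : x ∈ Z) (hxi : x ∈ (L.walk i).support) : x = L.src i := by
  obtain ⟨j, rfl⟩ := L.reverse.exists_tgt_eq hZ hx
  rw [L.eq_of_mem_support (L.walk j).start_mem_support hxi]
  rfl

theorem nonempty_of_meet_at_tgt {Z : Finset V} (P : H.Linkage X Z k) (Q : H.Linkage Y Z k)
    (hZ : Z.card ≤ k)
    (hmeet : ∀ i j, ∀ u ∈ (P.walk i).support, u ∈ (Q.walk j).support →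
      u = P.tgt i ∧ u = Q.tgt j) :
    Nonempty (H.Linkage X Y k) := by
  choose ρ hρ using fun i => Q.exists_tgt_eq hZ (P.tgt_mem i)
  have hρ_inj : Function.Injective ρ := fun i j h => P.tgt_injective (by rw [← hρ i, ← hρ j, h])
  refine ⟨⟨P.src, fun i => Q.src (ρ i),
    fun i => (P.walk i).append ((Q.walk (ρ i)).reverse.copy (hρ i) rfl),
    P.src_mem, fun i => Q.src_mem _, fun i j hij u hi hj => ?_⟩⟩
  simp only [Walk.mem_support_append_iff, Walk.support_copy, Walk.support_reverse,
    List.mem_reverse] at hi hj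
  rcases hi with hi | hi <;> rcases hj with hj | hj
  · exact hij (P.eq_of_mem_support hi hj)
  · obtain ⟨rfl, h⟩ := hmeet i (ρ j) u hi hj
    exact hij (P.tgt_injective (h.trans (hρ j)))
  · obtain ⟨rfl, h⟩ := hmeet j (ρ i) u hj hi
    exact hij (P.tgt_injective (h.trans (hρ i))).symm
  · exact hij (hρ_inj (Q.eq_of_mem_support hi hj))

theorem exists_extend_tgt [DecidableEq V] {H' : SimpleGraph V} {S : Finset V} {R : Set V}
    {x y : V} (Q : H'.Linkage Y ↑(insert y S) k) (hle : H' ≤ H) (hyx : H.Adj y x) (hxR : x ∉ R)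
    (hxS : x ∉ S) (hyR : y ∈ R) (hQ : ∀ j, ∀ u ∈ (Q.walk j).support, u = Q.tgt j ∨ u ∈ R) :
    ∃ Q' : H.Linkage Y ↑(insert x S) k,
      ∀ j, ∀ u ∈ (Q'.walk j).support, u = Q'.tgt j ∨ u ∈ R := by
  have hxQ : ∀ j, x ∉ (Q.walk j).support := fun j hx => by
    rcases hQ j x hx with h | h
    · have := h ▸ Q.tgt_mem j
      simp only [coe_insert, Set.mem_insert_iff, mem_coe] at this
      exact this.elim hyx.ne' hxS
    · exact hxR h
  have hstep : ∀ j, ∃ c ∈ (↑(insert x S) : Set V), ∃ W : H.Walk (Q.src j) c,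
      (∀ u ∈ W.support, u = c ∨ u ∈ R) ∧
      ∀ u ∈ W.support, u ∈ (Q.walk j).support ∨ u = x ∧ Q.tgt j = y := by
    intro j
    by_cases hj : Q.tgt j = y
    · refine ⟨x, by simp, ((Q.walk j).mapLe hle).concat (by rw [hj]; exact hyx), ?_, ?_⟩
      · simp only [Walk.support_concat, Walk.support_mapLe_eq_support, List.mem_append,
          List.mem_singleton]
        rintro u (hu | rfl)
        · exact .inr ((hQ j u hu).elim (fun h => h.trans hj ▸ hyR) id)
        · exact .inl rfl
      · simp [Walk.support_concat, hj]
    · have hS : Q.tgt j ∈ S := by simpa [hj] using Q.tgt_mem j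
      exact ⟨Q.tgt j, by simp [hS], (Q.walk j).mapLe hle, by simpa using hQ j,
        by simp +contextual⟩
  choose c hc W hW hW' using hstep
  refine ⟨⟨Q.src, c, W, Q.src_mem, hc, fun i j hij u hi hj => ?_⟩, hW⟩
  rcases hW' i u hi with hi | ⟨rfl, hi⟩ <;> rcases hW' j u hj with hj | ⟨hu, hj⟩
  · exact hij (Q.eq_of_mem_support hi hj)
  · exact hxQ i (hu ▸ hi)
  · exact hxQ j hj
  · exact hij (Q.tgt_injective (hi.trans hj.symm))

end Linkage

section Menger

variable {X Y : Set V} {k : ℕ}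

theorem nonempty_linkage_of_edgeSet_eq_empty [Finite V] (hH : H.edgeSet = ∅)
    (h : ∀ S : Finset V, H.Separates X Y S → k ≤ S.card) : Nonempty (H.Linkage X Y k) := by
  obtain ⟨Z, hZ⟩ := (Set.toFinite (X ∩ Y)).exists_finset_coe
  have hsep : H.Separates X Y Z := by
    refine Set.disjoint_left.2 fun u ⟨a, ha, p, hp⟩ hu => ?_
    cases p with
    | nil => exact hp u (by simp) (hZ ▸ ⟨ha, hu⟩)
    | cons had _ =>
      rw [← mem_edgeSet, hH] at had
      exact had
  let e : Fin k ↪ Z := (Fin.castLEEmb (h Z hsep)).trans Z.equivFin.symm.toEmbedding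
  have he : ∀ i, (e i : V) ∈ X ∩ Y := fun i => hZ ▸ mem_coe.2 (e i).2
  exact ⟨⟨fun i => e i, fun i => e i, fun _ => .nil, fun i => (he i).1, fun i => (he i).2,
    fun i j hij => by
      simp only [Walk.support_nil, List.singleton_disjoint, List.mem_singleton]
      exact Subtype.coe_injective.ne (e.injective.ne hij)⟩⟩

lemma Walk.exists_crossing_deleted_edge {e : Sym2 V} {S : Set V} {a b : V} (p : H.Walk a b)
    (ha : a ∈ X) (hp : ∀ w ∈ p.support, w ∉ S)
    (hb : b ∉ (H.deleteEdges {e}).reachAvoiding X S) :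
    ∃ u w, s(u, w) = e ∧ u ∈ (H.deleteEdges {e}).reachAvoiding X S ∧
      w ∉ (H.deleteEdges {e}).reachAvoiding X S := by
  obtain ⟨d, hd, hu, hw⟩ :=
    p.exists_boundary_dart _ (mem_reachAvoiding_of_mem ha (hp a p.start_mem_support)) hb
  refine ⟨d.fst, d.snd, ?_, hu, hw⟩
  by_contra hne
  exact hw (mem_reachAvoiding_of_adj hu (deleteEdges_adj.2 ⟨d.adj, hne⟩)
    (hp _ (p.dart_snd_mem_support_of_mem_darts hd)))

theorem exists_reachAvoiding_of_not_separates {e : Sym2 V} {S : Set V}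
    (hS : (H.deleteEdges {e}).Separates X Y S) (hnot : ¬ H.Separates X Y S) :
    ∃ x y, s(x, y) = e ∧ x ∈ (H.deleteEdges {e}).reachAvoiding X S ∧
      y ∈ (H.deleteEdges {e}).reachAvoiding Y S := by
  obtain ⟨b, ⟨a, ha, p, hp⟩, hb⟩ := Set.not_disjoint_iff.1 hnot
  obtain ⟨x, w, hxw, hx, -⟩ :=
    p.exists_crossing_deleted_edge ha hp (Set.disjoint_right.1 hS hb)
  obtain ⟨y, w', hyw', hy, -⟩ :=
    p.reverse.exists_crossing_deleted_edge hb (by simpa using hp)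
      (Set.disjoint_right.1 hS.symm ha)
  have hxy : x ≠ y := fun h =>
    Set.disjoint_left.1 (hS.disjoint_reachAvoiding separates_self) hx (h ▸ hy)
  refine ⟨x, y, ?_, hx, hy⟩
  rcases Sym2.eq_iff.1 (hxw.trans hyw'.symm) with ⟨h, -⟩ | ⟨-, rfl⟩
  · exact absurd h hxy
  · exact hxw

theorem separates_of_separates_insert {x y : V} {S T : Set V}
    (hS : (H.deleteEdges {s(x, y)}).Separates X Y S)
    (hy : y ∈ (H.deleteEdges {s(x, y)}).reachAvoiding Y S)
    (hT : (H.deleteEdges {s(x, y)}).Separates X (insert x S) T) : H.Separates X Y T := by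
  refine Set.disjoint_left.2 fun b ⟨a, ha, p, hp⟩ hb => ?_
  have hdisj := hS.disjoint_reachAvoiding (Disjoint.mono_right (Set.subset_insert x S) hT)
  have hbR : b ∉ (H.deleteEdges {s(x, y)}).reachAvoiding X T := fun hbR => by
    by_cases hbS : b ∈ S
    · exact Set.disjoint_left.1 hT hbR (Set.mem_insert_of_mem x hbS)
    · exact Set.disjoint_left.1 hdisj hbR (mem_reachAvoiding_of_mem hb hbS)
  obtain ⟨u, w, huw, hu, -⟩ := p.exists_crossing_deleted_edge ha hp hbR
  have hux : u ≠ x := fun h => Set.disjoint_left.1 hT hu (h ▸ Set.mem_insert x S)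
  obtain rfl : u = y := by
    rcases Sym2.eq_iff.1 huw with ⟨h, -⟩ | ⟨h, -⟩
    exacts [absurd h hux, h]
  exact Set.disjoint_left.1 hdisj hu hy

theorem nonempty_linkage_of_adj [DecidableEq V] {x y : V} {S : Finset V} (hxy : H.Adj x y)
    (hS : (H.deleteEdges {s(x, y)}).Separates X Y S)
    (hx : x ∈ (H.deleteEdges {s(x, y)}).reachAvoiding X S)
    (hy : y ∈ (H.deleteEdges {s(x, y)}).reachAvoiding Y S) (hSk : S.card < k)
    (hk : ∀ T : Finset V, H.Separates X Y T → k ≤ T.card)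
    (ih : ∀ X Y : Set V,
      (∀ T : Finset V, (H.deleteEdges {s(x, y)}).Separates X Y T → k ≤ T.card) →
        Nonempty ((H.deleteEdges {s(x, y)}).Linkage X Y k)) :
    Nonempty (H.Linkage X Y k) := by
  set H' := H.deleteEdges {s(x, y)}
  have hH' : H.deleteEdges {s(y, x)} = H' := by rw [Sym2.eq_swap]
  have hdisj := hS.disjoint_reachAvoiding separates_self
  obtain ⟨P₀⟩ := ih X ↑(insert x S) fun T hT =>
    hk T (separates_of_separates_insert hS hy (by simpa using hT))
  obtain ⟨Q₀⟩ := ih Y ↑(insert y S) fun T hT =>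
    hk T (separates_of_separates_insert (hH' ▸ hS.symm) (hH' ▸ hx)
      (by simpa [hH'] using hT)).symm
  obtain ⟨P, hP⟩ := P₀.exists_support_subset_reachAvoiding
  obtain ⟨Q₁, hQ₁⟩ := Q₀.exists_support_subset_reachAvoiding
  obtain ⟨Q, hQ⟩ := Q₁.exists_extend_tgt (deleteEdges_le _) hxy.symm
    (Set.disjoint_left.1 hdisj hx) (notMem_of_mem_reachAvoiding hx) hy
    fun j u hu => (hQ₁ j u hu).imp_right fun h => reachAvoiding_anti (by simp) h
  refine (P.mapLe (deleteEdges_le _)).nonempty_of_meet_at_tgt Q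
    ((card_insert_le _ _).trans hSk) fun i j u hi hj => ?_
  change u ∈ ((P.walk i).mapLe _).support at hi
  rw [Walk.support_mapLe_eq_support] at hi
  change u = P.tgt i ∧ _
  rcases hP i u hi with rfl | hu
  · refine ⟨rfl, (hQ j _ hj).resolve_right fun hPY => ?_⟩
    have hPS := notMem_of_mem_reachAvoiding hPY
    have := P.tgt_mem i
    simp only [coe_insert, Set.mem_insert_iff, hPS, or_false] at this
    exact Set.disjoint_left.1 hdisj hx (this ▸ hPY)
  · have huS := notMem_of_mem_reachAvoiding hu
    rcases hQ j u hj with rfl | huY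
    · exact absurd (Q.tgt_mem j) huS
    · exact absurd huY (Set.disjoint_left.1 hdisj (reachAvoiding_anti (by simp) hu))

theorem nonempty_linkage [Finite V] (H : SimpleGraph V) (X Y : Set V) (k : ℕ)
    (h : ∀ S : Finset V, H.Separates X Y S → k ≤ S.card) : Nonempty (H.Linkage X Y k) := by
  classical
  induction H using WellFoundedLT.induction generalizing X Y with
  | ind H ih =>
  obtain hH | ⟨e, he⟩ := H.edgeSet.eq_empty_or_nonempty
  · exact nonempty_linkage_of_edgeSet_eq_empty hH h
  have hlt : H.deleteEdges {e} < H := (deleteEdges_le _).lt_of_ne fun h =>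
    (Set.disjoint_singleton_right.1 (deleteEdges_eq_self.1 h)) he
  by_cases h' : ∀ S : Finset V, (H.deleteEdges {e}).Separates X Y S → k ≤ S.card
  · exact (ih _ hlt X Y h').map (·.mapLe (deleteEdges_le _))
  push Not at h'
  obtain ⟨S, hS, hSk⟩ := h'
  obtain ⟨x, y, rfl, hx, hy⟩ :=
    exists_reachAvoiding_of_not_separates hS fun hS' => (hSk.trans_le (h S hS')).false
  exact nonempty_linkage_of_adj he hS hx hy hSk h (ih _ hlt)

end Menger

lemma Subgraph.mem_verts_of_mem_support {G' : H.Subgraph} {a b : V}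
    (p : G'.spanningCoe.Walk a b) (ha : a ∈ G'.verts) : ∀ u ∈ p.support, u ∈ G'.verts := by
  induction p with
  | nil => simpa
  | cons h p ih => simpa [ha] using ih (Subgraph.Adj.snd_mem h)

section Fan

variable [DecidableEq V] {G : SimpleGraph V} {v : V} {D : Finset V}

lemma _root_.KConnected.exists_walk {k : ℕ} (hconn : KConnected G k) {T : Finset V}
    (hT : T.card ≤ k) {a b : V} (ha : a ∉ T) (hb : b ∉ T) :
    ∃ p : G.Walk a b, ∀ u ∈ p.support, u ∉ T := by
  obtain ⟨w⟩ := (hconn.2 T hT).preconnected ⟨a, by simpa⟩ ⟨b, by simpa⟩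
  have hw : ∀ u ∈ (w.map (Subgraph.hom _)).support, u ∉ T := by
    rw [Walk.support_map]
    intro u hu
    obtain ⟨u, -, rfl⟩ := List.mem_map.1 hu
    simpa using u.2
  exact ⟨_, hw⟩

theorem subset_of_separates_deleteVerts {k : ℕ} (hconn : KConnected G k) {S : Finset V}
    {X : Set V} (hXD : Disjoint X D) (hv : v ∈ D)
    (hS : ((⊤ : G.Subgraph).deleteVerts D).spanningCoe.Separates X {u | G.Adj v u ∧ u ∉ D} S)
    (hcard : ((S ∪ D).erase v).card ≤ k) : X ⊆ S := by
  intro a ha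
  by_contra haS
  have haD : a ∉ D := Set.disjoint_left.1 hXD ha
  obtain ⟨p, hp⟩ := hconn.exists_walk hcard (a := a) (b := v)
    (by simp [haD, show a ∉ S from haS]) (by simp)
  have hR : ∀ u ∈ ((⊤ : G.Subgraph).deleteVerts D).spanningCoe.reachAvoiding X S, u ∉ D := by
    rintro u ⟨b, hb, q, -⟩
    simpa using Subgraph.mem_verts_of_mem_support q (by simpa using Set.disjoint_left.1 hXD hb) u
      q.end_mem_support
  obtain ⟨d, hd, hu, hw⟩ := p.exists_boundary_dart _ (mem_reachAvoiding_of_mem ha haS)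
    fun h => hR v h hv
  have hwT := hp _ (p.dart_snd_mem_support_of_mem_darts hd)
  by_cases hwv : d.snd = v
  · exact Set.disjoint_left.1 hS hu ⟨hwv ▸ d.adj.symm, hR _ hu⟩
  · simp only [mem_erase, mem_union, not_and, not_or] at hwT
    obtain ⟨hwS, hwD⟩ := hwT hwv
    exact hw (mem_reachAvoiding_of_adj hu (by simp [hR _ hu, hwD, d.adj]) (by simpa using hwS))

theorem card_le_of_separates_deleteVerts {k : ℕ} (hconn : KConnected G k) {S X : Finset V}
    (hXD : Disjoint X D) (hv : v ∈ D) (hk : X.card + (D.erase v).card ≤ k + 1)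
    (hS : ((⊤ : G.Subgraph).deleteVerts D).spanningCoe.Separates X {u | G.Adj v u ∧ u ∉ D} S) :
    X.card ≤ S.card := by
  by_contra! hSX
  have hT : (S ∪ D).erase v ⊆ S ∪ D.erase v := fun x hx => by
    simp only [mem_erase, mem_union] at hx ⊢
    tauto
  have hTk := (card_le_card hT).trans (card_union_le _ _)
  have hXS := subset_of_separates_deleteVerts hconn (disjoint_coe.2 hXD) hv hS (by omega)
  exact hSX.not_ge (card_le_card (coe_subset.1 hXS))

theorem Linkage.exists_fan (hv : v ∈ D) {X : Finset V} {k : ℕ} (hX : X.card ≤ k)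
    (L : ((⊤ : G.Subgraph).deleteVerts D).spanningCoe.Linkage X {u | G.Adj v u ∧ u ∉ D} k) :
    ∃ P : ∀ i, G.Walk (L.src i) v,
      (∀ i, (P i).IsPath ∧ ∀ x ∈ (P i).internals, x ∉ X ∧ x ∉ D) ∧
      ∀ i j, i ≠ j → ∀ x, x ∈ (P i).support → x ∈ (P j).support → x = v := by
  have hD : ∀ i, ∀ u ∈ (L.walk i).bypass.support, u ∉ D := fun i u hu => by
    have hu' : u ∈ (L.walk i).reverse.support := by
      simpa using Walk.support_bypass_subset_support (L.walk i) hu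
    simpa using Subgraph.mem_verts_of_mem_support _ (by simpa using (L.tgt_mem i).2) u hu'
  refine ⟨fun i => ((L.walk i).bypass.mapLe (Subgraph.spanningCoe_le _)).concat
    (L.tgt_mem i).1.symm, fun i => ⟨?_, fun x hx => ?_⟩, fun i j hij x hi hj => ?_⟩
  · refine ((Walk.bypass_isPath (L.walk i)).mapLe _).concat ?_ _
    rw [Walk.support_mapLe_eq_support]
    exact fun h => hD i v h hv
  · have hnodup := (Walk.bypass_isPath (L.walk i)).support_nodup
    rw [← Walk.cons_tail_support] at hnodup
    rw [Walk.internals, Walk.support_concat, Walk.support_mapLe_eq_support,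
      ← Walk.cons_tail_support, List.cons_append, List.tail_cons, List.dropLast_concat] at hx
    have hxi := Walk.support_bypass_subset_support _ (List.mem_of_mem_tail hx)
    refine ⟨fun hxX => (List.nodup_cons.1 hnodup).1 ?_, hD i x (List.mem_of_mem_tail hx)⟩
    rwa [L.eq_src_of_mem_support hX hxX hxi] at hx
  · simp only [Walk.support_concat, Walk.support_mapLe_eq_support, List.mem_append,
      List.mem_singleton] at hi hj
    rcases hi with hi | rfl
    · rcases hj with hj | rfl
      · exact absurd (L.eq_of_mem_support (Walk.support_bypass_subset_support _ hi)
          (Walk.support_bypass_subset_support _ hj)) hij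
      · rfl
    · rfl

end Fan

end SimpleGraph

theorem fan_excluding_F {V : Type*} [Fintype V] [DecidableEq V]
    (G : SimpleGraph V) (f : ℕ) (hconn : KConnected G (3 * f / 2 + 1))
    (F : Finset V) (hF : F.card ≤ f)
    (A B : Finset V) (hunion : A ∪ B = Finset.univ) (hdisj : A ∩ B = ∅)
    (v : V) (hvB : v ∈ B)
    (hBF : (B ∩ (F.erase v)).card ≤ f / 2)
    (hA : f + 1 ≤ A.card) :
    ∃ (a : Fin (f + 1) → V) (P : ∀ i, G.Walk (a i) v),
      Function.Injective a ∧
      (∀ i, a i ∈ A ∧ (P i).IsPath ∧ ∀ x ∈ (P i).internals, x ∉ F) ∧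
      ∀ i j, i ≠ j → ∀ x, x ∈ (P i).support → x ∈ (P j).support → x = v := by
  obtain ⟨A', hFA', hA'A, hA'card⟩ := exists_subsuperset_card_eq inter_subset_left
    ((card_le_card inter_subset_right).trans (hF.trans f.le_succ)) hA
  set D := insert v (B ∩ F.erase v)
  have hA'D : Disjoint A' D :=
    (disjoint_iff_inter_eq_empty.2 hdisj).mono hA'A (insert_subset hvB inter_subset_left)
  have hDv : D.erase v = B ∩ F.erase v :=
    erase_insert fun h => (mem_erase.1 (mem_inter.1 h).2).1 rfl
  obtain ⟨L⟩ := SimpleGraph.nonempty_linkage _ _ _ (f + 1) fun S hS =>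
    hA'card ▸ SimpleGraph.card_le_of_separates_deleteVerts hconn hA'D (mem_insert_self _ _)
      (by rw [hDv]; omega) hS
  obtain ⟨P, hP, hPv⟩ := L.exists_fan (mem_insert_self _ _) hA'card.le
  refine ⟨L.src, P, L.src_injective,
    fun i => ⟨hA'A (L.src_mem i), (hP i).1, fun x hx hxF => ?_⟩, hPv⟩
  obtain ⟨hxA', hxD⟩ := (hP i).2 x hx
  rcases mem_union.1 (hunion ▸ mem_univ x) with hxA | hxB
  · exact hxA' (hFA' (mem_inter.2 ⟨hxA, hxF⟩))
  · exact hxD (mem_insert.2 (or_iff_not_imp_left.2 fun hxv =>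
      mem_inter.2 ⟨hxB, mem_erase.2 ⟨hxv, hxF⟩⟩))
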